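/- arXiv:0804.2585 — 2 statements merged into one kernel-verified Lean document; each statement's English description precedes it below -/
import Mathlib

section
/- For every n ≥ 0, the identity P_n(x_1 + y_1, …, x_n + y_n) = Σ_{k=0}^n P_k(x_1,…,x_k) · P_{n−k}(y_1,…,y_{n−k}) holds in the polynomial ring ℚ[x_1,…,x_n, y_1,…,y_n]. -/
/-- The Kailath–Segall polynomials, defined by `P₀ = 1` and the recurrence
`Pₙ = (1/n)(Pₙ₋₁ x₁ − Pₙ₋₂ x₂ + ⋯ + (−1)^{n+1} P₀ xₙ)`. -/
noncomputable def KS {A : Type*} [CommRing A] [Algebra ℚ A] (x : ℕ → A) : ℕ → A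
  | 0 => 1
  | n + 1 =>
      (((n : ℚ) + 1)⁻¹) •
        ∑ j ∈ Finset.range (n + 1), ((-1 : A) ^ j * KS x (n - j) * x (j + 1))
  termination_by n => n
  decreasing_by omega

/-!
With `P_x(t) = ∑ Pₙ(x) tⁿ` and `Q_x(t) = ∑ⱼ (-1)ʲ x_{j+1} tʲ`, the recurrence defining the
Kailath–Segall polynomials says exactly that `P_x' = P_x · Q_x` (so `P_x = exp ∫ Q_x`).
Since `Q_{x+y} = Q_x + Q_y`, the Leibniz rule shows that `P_x · P_y` solves the equation for
`x + y`; over a `ℚ`-algebra a power series solution of `F' = F · Q` is determined by its constant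
coefficient, hence `P_{x+y} = P_x · P_y`, which is the identity read coefficientwise.
-/

open PowerSeries Finset

theorem PowerSeries.eq_of_derivative_eq_mul {R : Type*} [CommSemiring R] [IsAddTorsionFree R]
    {f g q : R⟦X⟧} (hf : d⁄dX R f = f * q) (hg : d⁄dX R g = g * q)
    (h0 : constantCoeff f = constantCoeff g) : f = g := by
  ext n
  induction n using Nat.strong_induction_on with
  | _ n ih =>
  cases n with
  | zero => simpa using h0
  | succ n =>
    have hcoeff : coeff (n + 1) f * (n + 1) = coeff (n + 1) g * (n + 1) := by
      rw [← coeff_derivative, ← coeff_derivative, hf, hg, coeff_mul, coeff_mul]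
      refine sum_congr rfl fun p hp => ?_
      rw [ih p.1 (Nat.lt_succ_of_le (HasAntidiagonal.antidiagonal.fst_le hp))]
    exact nsmul_right_injective n.succ_ne_zero (by simpa [nsmul_eq_mul, mul_comm] using hcoeff)

section

variable {A : Type*} [CommRing A]

noncomputable def KS.logDerivSeries (x : ℕ → A) : A⟦X⟧ :=
  PowerSeries.mk fun j => (-1) ^ j * x (j + 1)

theorem KS.logDerivSeries_add (x y : ℕ → A) :
    logDerivSeries (fun k => x k + y k) = logDerivSeries x + logDerivSeries y := by
  ext j
  simp [logDerivSeries, mul_add]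

variable [Algebra ℚ A]

theorem KS_succ_mul (x : ℕ → A) (n : ℕ) :
    KS x (n + 1) * (n + 1) = ∑ j ∈ range (n + 1), (-1) ^ j * KS x (n - j) * x (j + 1) := by
  have hcast : ((n : A) + 1) = ((n : ℚ) + 1) • (1 : A) := by simp [Algebra.smul_def]
  rw [KS, hcast, mul_smul_comm, mul_one, smul_smul, mul_inv_cancel₀ (by positivity), one_smul]

noncomputable def KS.series (x : ℕ → A) : A⟦X⟧ := PowerSeries.mk (KS x)

theorem KS.derivative_series (x : ℕ → A) :
    d⁄dX A (series x) = series x * logDerivSeries x := by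
  ext n
  rw [coeff_derivative, coeff_mul, ← Nat.sum_antidiagonal_swap]
  simp only [Prod.fst_swap, Prod.snd_swap]
  rw [Nat.sum_antidiagonal_eq_sum_range_succ
    (fun j c => coeff c (series x) * coeff j (logDerivSeries x))]
  simp only [series, logDerivSeries, coeff_mk, KS_succ_mul]
  exact sum_congr rfl fun j _ => by ring

theorem KS.series_add (x y : ℕ → A) :
    series (fun k => x k + y k) = series x * series y := by
  have := IsAddTorsionFree.of_module_rat (M := A)
  refine eq_of_derivative_eq_mul (derivative_series _) ?_ (by simp [series, KS])
  rw [Derivation.leibniz, derivative_series, derivative_series, logDerivSeries_add, smul_eq_mul,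
    smul_eq_mul]
  ring

end

/-- In the polynomial ring with variables `xₖ = X (inl k)`, `yₖ = X (inr k)`:
`Pₙ(x₁+y₁, …, xₙ+yₙ) = Σ_{k=0}^n Pₖ(x₁,…,xₖ) Pₙ₋ₖ(y₁,…,yₙ₋ₖ)`. -/
theorem kailathSegall_binomial (n : ℕ) :
    KS (fun k => (MvPolynomial.X (Sum.inl k) + MvPolynomial.X (Sum.inr k) :
        MvPolynomial (ℕ ⊕ ℕ) ℚ)) n =
      ∑ k ∈ Finset.range (n + 1),
        KS (fun j => (MvPolynomial.X (Sum.inl j) : MvPolynomial (ℕ ⊕ ℕ) ℚ)) k *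
          KS (fun j => (MvPolynomial.X (Sum.inr j) : MvPolynomial (ℕ ⊕ ℕ) ℚ)) (n - k) := by
  rw [← Nat.sum_antidiagonal_eq_sum_range_succ (fun a b => KS _ a * KS _ b)]
  have h := KS.series_add (fun j => (MvPolynomial.X (Sum.inl j) : MvPolynomial (ℕ ⊕ ℕ) ℚ))
    (fun j => MvPolynomial.X (Sum.inr j))
  simpa [KS.series, coeff_mul] using congrArg (coeff n) h
end

section
/- For every n ≥ 2, the identity P_n(x, t, 0, …, 0) = H_n(x, t) holds in ℚ[x, t], where H_n(x, t) are the generalized Hermite polynomials; equivalently, the n-th coefficient of the formal power series exp(u x − (1/2) u² t) in ℚ[x,t][[u]] equals P_n(x, t, 0, …, 0). -/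
/-- The exponential of a formal power series with zero constant term:
`exp f = Σ_k f^k / k!`; only `k ≤ n` contribute to the `n`-th coefficient. -/
noncomputable def psExp {A : Type*} [CommRing A] [Algebra ℚ A]
    (f : PowerSeries A) : PowerSeries A :=
  PowerSeries.mk fun n =>
    ∑ k ∈ Finset.range (n + 1), ((k.factorial : ℚ))⁻¹ • PowerSeries.coeff n (f ^ k)

theorem natCast_succ_mul_inv_smul {A : Type*} [Ring A] [Algebra ℚ A] (n : ℕ) (a : A) :
    ((n : A) + 1) * (((n : ℚ) + 1)⁻¹ • a) = a := by
  rw [Algebra.smul_def, ← mul_assoc, ← map_natCast (algebraMap ℚ A),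
    ← map_one (algebraMap ℚ A), ← map_add, ← map_mul, mul_inv_cancel₀ (by positivity),
    map_one, one_mul]

namespace PowerSeries

variable {A : Type*} [CommRing A]

theorem eq_of_derivative_eq_mul_s5 [IsAddTorsionFree A] {g h φ : A⟦X⟧}
    (hg : d⁄dX A g = g * φ) (hh : d⁄dX A h = h * φ)
    (h0 : constantCoeff g = constantCoeff h) : g = h := by
  ext n
  induction n using Nat.strong_induction_on with
  | _ n ih =>
    cases n with
    | zero => simpa using h0
    | succ n =>
      have hlow : coeff n (g * φ) = coeff n (h * φ) := by
        simp only [coeff_mul]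
        refine Finset.sum_congr rfl fun ij hij => ?_
        rw [ih ij.1 (by rw [Finset.HasAntidiagonal.mem_antidiagonal] at hij; omega)]
      rw [← hg, ← hh, coeff_derivative, coeff_derivative, mul_comm, mul_comm _ (_ + 1),
        ← Nat.cast_succ, ← nsmul_eq_mul, ← nsmul_eq_mul] at hlow
      exact IsAddTorsionFree.nsmul_right_injective n.succ_ne_zero hlow

variable [Algebra ℚ A]

theorem psExp_eq_subst_exp {f : A⟦X⟧} (hf : constantCoeff f = 0) :
    psExp f = (exp A).subst f := by
  ext n
  have hvanish : ∀ k, n < k → coeff n (f ^ k) = 0 := fun k hk =>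
    coeff_of_lt_order n
      ((ENat.natCast_lt_natCast.2 hk).trans_le (le_order_pow_of_constantCoeff_eq_zero k hf))
  rw [psExp, coeff_mk, coeff_subst' (HasSubst.of_constantCoeff_zero' hf),
    finsum_eq_sum_of_support_subset (s := Finset.range (n + 1))]
  · simp [Algebra.smul_def]
  · intro k hk
    contrapose! hk
    simp [hvanish k (by simpa using hk)]

theorem derivative_psExp {f : A⟦X⟧} (hf : constantCoeff f = 0) :
    d⁄dX A (psExp f) = psExp f * d⁄dX A f := by
  rw [psExp_eq_subst_exp hf, derivative_subst (HasSubst.of_constantCoeff_zero' hf),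
    derivative_exp]

end PowerSeries

open PowerSeries

section KailathSegall

variable {A : Type*} [CommRing A] [Algebra ℚ A] (x : ℕ → A)

-- The `k = 0` coefficient is `0` since `q / 0 = 0` in `ℚ`.
noncomputable def ksLog : A⟦X⟧ :=
  mk fun k => ((-1) ^ (k + 1) / k : ℚ) • x k

theorem constantCoeff_ksLog : constantCoeff (ksLog x) = 0 := by
  simp [ksLog, ← coeff_zero_eq_constantCoeff_apply]

theorem derivative_ksLog : d⁄dX A (ksLog x) = mk fun j => (-1) ^ j * x (j + 1) := by
  ext j
  rw [coeff_derivative, ksLog, coeff_mk, coeff_mk, mul_comm, Nat.cast_succ, div_eq_inv_mul,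
    mul_smul, natCast_succ_mul_inv_smul]
  simp [pow_succ, Algebra.smul_def]

theorem KS_succ (n : ℕ) :
    KS x (n + 1) = ((n : ℚ) + 1)⁻¹ •
      ∑ j ∈ Finset.range (n + 1), (-1 : A) ^ j * KS x (n - j) * x (j + 1) := by
  rw [KS]

theorem derivative_mk_KS : d⁄dX A (mk (KS x)) = mk (KS x) * d⁄dX A (ksLog x) := by
  ext n
  rw [coeff_derivative, coeff_mk, KS_succ, mul_comm, natCast_succ_mul_inv_smul, derivative_ksLog,
    mul_comm, coeff_mul,
    Finset.Nat.sum_antidiagonal_eq_sum_range_succ (fun i j => coeff i _ * coeff j _)]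
  simp only [coeff_mk]
  exact Finset.sum_congr rfl fun j _ => by ring

theorem mk_KS_eq_psExp : mk (KS x) = psExp (ksLog x) :=
  have := IsAddTorsionFree.of_module_rat A
  eq_of_derivative_eq_mul_s5 (derivative_mk_KS x) (derivative_psExp (constantCoeff_ksLog x)) (by
    simp [psExp, KS])

end KailathSegall

theorem kailathSegall_hermite_general (n : ℕ) :
    KS (fun k => if k = 1 then (MvPolynomial.X 0 : MvPolynomial (Fin 2) ℚ)
        else if k = 2 then MvPolynomial.X 1 else 0) n =
      PowerSeries.coeff n (psExp (PowerSeries.mk fun k =>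
        if k = 1 then (MvPolynomial.X 0 : MvPolynomial (Fin 2) ℚ)
        else if k = 2 then (-(1 / 2 : ℚ)) • MvPolynomial.X 1 else 0)) := by
  rw [← coeff_mk n (KS _), mk_KS_eq_psExp]
  congr 2
  refine PowerSeries.ext fun k => ?_
  rcases k with _ | _ | _ | k <;> simp [ksLog]
  norm_num [neg_div]

/-- With `x = X 0`, `t = X 1` in `ℚ[x,t]`, for every `n ≥ 2`:
`Pₙ(x, t, 0, …, 0) = Hₙ(x,t)`, where `Hₙ(x,t)` is the `n`-th coefficient of the
generating series `exp(u x − (1/2) u² t)` in `ℚ[x,t][[u]]`. -/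
theorem kailathSegall_hermite (n : ℕ) (hn : 2 ≤ n) :
    KS (fun k => if k = 1 then (MvPolynomial.X 0 : MvPolynomial (Fin 2) ℚ)
        else if k = 2 then MvPolynomial.X 1 else 0) n =
      PowerSeries.coeff n (psExp (PowerSeries.mk fun k =>
        if k = 1 then (MvPolynomial.X 0 : MvPolynomial (Fin 2) ℚ)
        else if k = 2 then (-(1 / 2 : ℚ)) • MvPolynomial.X 1 else 0)) :=
  kailathSegall_hermite_general n
end
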